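/- Under Assumptions 1 and 2, the exact prediction step incurs a one-step error bound: for any point x_k and sampling times t_k, t_{k+1} = t_k + h, the predicted point x_{k+1|k} = x_k − h·[∇ₓₓ f(x_k;t_k)]⁻¹ ∇_{tx} f(x_k;t_k) satisfies ‖x_{k+1|k} − x*(t_{k+1})‖ ≤ σ·‖x_k − x*(t_k)‖ + (h²/2)·(C₀²C₁/m³ + 2C₀C₂/m² + C₃/m), where σ := 1 + h·(C₀C₁/m² + C₂/m). -/

import Mathlib

noncomputable section

/-- The setting of a time-varying, smooth, strongly convex optimization problem
`min_{x ∈ ℝⁿ} f(x;t)`, bundling the objective `f`, its derivatives, the Hessian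
inverse, the optimal trajectory `x*(t)`, and Assumptions 1 and 2 of the paper. -/
structure TVOpt (n : ℕ) where
  /-- the objective `f(x;t)` -/
  f : EuclideanSpace ℝ (Fin n) → ℝ → ℝ
  /-- the gradient `∇ₓ f(x;t)` -/
  grad : EuclideanSpace ℝ (Fin n) → ℝ → EuclideanSpace ℝ (Fin n)
  /-- the Hessian `∇ₓₓ f(x;t)` -/
  hess : EuclideanSpace ℝ (Fin n) → ℝ →
    EuclideanSpace ℝ (Fin n) →L[ℝ] EuclideanSpace ℝ (Fin n)
  /-- the Hessian inverse `[∇ₓₓ f(x;t)]⁻¹` -/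
  hessInv : EuclideanSpace ℝ (Fin n) → ℝ →
    EuclideanSpace ℝ (Fin n) →L[ℝ] EuclideanSpace ℝ (Fin n)
  /-- the mixed partial derivative `∇_{tx} f(x;t)` -/
  dtgrad : EuclideanSpace ℝ (Fin n) → ℝ → EuclideanSpace ℝ (Fin n)
  /-- the third derivative tensor `∇ₓₓₓ f(x;t)` -/
  d3 : EuclideanSpace ℝ (Fin n) → ℝ →
    EuclideanSpace ℝ (Fin n) →L[ℝ] EuclideanSpace ℝ (Fin n) →L[ℝ] EuclideanSpace ℝ (Fin n)
  /-- the time derivative of the Hessian `∇_{xtx} f(x;t)` -/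
  dthess : EuclideanSpace ℝ (Fin n) → ℝ →
    EuclideanSpace ℝ (Fin n) →L[ℝ] EuclideanSpace ℝ (Fin n)
  /-- the second time derivative of the gradient `∇_{ttx} f(x;t)` -/
  dttgrad : EuclideanSpace ℝ (Fin n) → ℝ → EuclideanSpace ℝ (Fin n)
  /-- the optimal trajectory `x*(t)` -/
  xstar : ℝ → EuclideanSpace ℝ (Fin n)
  /-- strong convexity constant -/
  m : ℝ
  /-- Hessian norm bound (gradient Lipschitz constant) -/
  L : ℝ
  C0 : ℝ
  C1 : ℝ
  C2 : ℝ
  C3 : ℝ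
  m_pos : 0 < m
  grad_spec : ∀ (x : EuclideanSpace ℝ (Fin n)) (t : ℝ), HasGradientAt (fun y => f y t) (grad x t) x
  hess_spec : ∀ (x : EuclideanSpace ℝ (Fin n)) (t : ℝ), HasFDerivAt (fun y => grad y t) (hess x t) x
  dtgrad_spec : ∀ (x : EuclideanSpace ℝ (Fin n)) (t : ℝ), HasDerivAt (fun s => grad x s) (dtgrad x t) t
  d3_spec : ∀ (x : EuclideanSpace ℝ (Fin n)) (t : ℝ), HasFDerivAt (fun y => hess y t) (d3 x t) x
  dthess_spec : ∀ (x : EuclideanSpace ℝ (Fin n)) (t : ℝ), HasDerivAt (fun s => hess x s) (dthess x t) t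
  dttgrad_spec : ∀ (x : EuclideanSpace ℝ (Fin n)) (t : ℝ), HasDerivAt (fun s => dtgrad x s) (dttgrad x t) t
  /-- Assumption 1: `∇ₓₓ f(x;t) ⪰ m·I` uniformly in `x` and `t`. -/
  strong_convex : ∀ (x : EuclideanSpace ℝ (Fin n)) (t : ℝ) (v : EuclideanSpace ℝ (Fin n)),
    m * ‖v‖ ^ 2 ≤ @inner ℝ _ _ v (hess x t v)
  hessInv_left : ∀ (x : EuclideanSpace ℝ (Fin n)) (t : ℝ), ContinuousLinearMap.comp (hessInv x t) (hess x t) =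
    ContinuousLinearMap.id ℝ (EuclideanSpace ℝ (Fin n))
  hessInv_right : ∀ (x : EuclideanSpace ℝ (Fin n)) (t : ℝ), ContinuousLinearMap.comp (hess x t) (hessInv x t) =
    ContinuousLinearMap.id ℝ (EuclideanSpace ℝ (Fin n))
  /-- Assumption 2: bounded derivatives, uniformly in `x` and `t`. -/
  hess_bound : ∀ (x : EuclideanSpace ℝ (Fin n)) (t : ℝ), ‖hess x t‖ ≤ L
  dtgrad_bound : ∀ (x : EuclideanSpace ℝ (Fin n)) (t : ℝ), ‖dtgrad x t‖ ≤ C0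
  d3_bound : ∀ (x : EuclideanSpace ℝ (Fin n)) (t : ℝ), ‖d3 x t‖ ≤ C1
  dthess_bound : ∀ (x : EuclideanSpace ℝ (Fin n)) (t : ℝ), ‖dthess x t‖ ≤ C2
  dttgrad_bound : ∀ (x : EuclideanSpace ℝ (Fin n)) (t : ℝ), ‖dttgrad x t‖ ≤ C3
  /-- `x*(t)` minimizes `f(·;t)` -/
  xstar_min : ∀ t : ℝ, IsMinOn (fun x => f x t) Set.univ (xstar t)
  /-- equivalently, `∇ₓ f(x*(t);t) = 0` -/
  xstar_grad : ∀ t : ℝ, grad (xstar t) t = 0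


/-!
Split the error at the prediction made from `x*(t_k)`. The prediction map is
`(1 + hK)`-Lipschitz, `K = C₀C₁/m² + C₂/m`, because the direction `[∇ₓₓ f]⁻¹ ∇_{tx} f` is
`K`-Lipschitz (`‖[∇ₓₓ f]⁻¹‖ ≤ 1/m` by strong convexity). Started from `x*(t_k)`, the prediction
cancels the first-order Taylor terms of `∇ₓ f` around `(x*(t_k), t_k)`, so `∇ₓ f` at the
predicted point and time `t_{k+1}` is `O(h²)`; strong monotonicity of `∇ₓ f` turns this into a
bound on the distance to `x*(t_{k+1})`.
-/

open Set

section Calculus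

variable {E F : Type*} [NormedAddCommGroup E] [NormedSpace ℝ E]
  [NormedAddCommGroup F] [NormedSpace ℝ F]

theorem norm_sub_le_of_hasFDerivAt_of_norm_le {f : E → F} {f' : E → E →L[ℝ] F} {C : ℝ}
    (hf : ∀ x, HasFDerivAt f (f' x) x) (hC : ∀ x, ‖f' x‖ ≤ C) (x y : E) :
    ‖f x - f y‖ ≤ C * ‖x - y‖ :=
  convex_univ.norm_image_sub_le_of_norm_hasFDerivWithin_le
    (fun z _ => (hf z).hasFDerivWithinAt) (fun z _ => hC z) (mem_univ y) (mem_univ x)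

theorem norm_sub_le_of_hasDerivAt_of_norm_le {f f' : ℝ → F} {C : ℝ}
    (hf : ∀ t, HasDerivAt f (f' t) t) (hC : ∀ t, ‖f' t‖ ≤ C) (t s : ℝ) :
    ‖f t - f s‖ ≤ C * |t - s| :=
  convex_univ.norm_image_sub_le_of_norm_hasDerivWithin_le
    (fun z _ => (hf z).hasDerivWithinAt) (fun z _ => hC z) (mem_univ s) (mem_univ t)

theorem norm_sub_sub_smul_deriv_le {g g' : ℝ → F} {a b K : ℝ} (hab : a ≤ b)
    (hg : ∀ s ∈ Icc a b, HasDerivAt g (g' s) s)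
    (hg' : ∀ s ∈ Ico a b, ‖g' s - g' a‖ ≤ K * (s - a)) :
    ‖g b - g a - (b - a) • g' a‖ ≤ K / 2 * (b - a) ^ 2 := by
  have hr : ∀ s ∈ Icc a b, HasDerivAt (fun s => g s - g a - (s - a) • g' a) (g' s - g' a) s :=
    fun s hs => by
      have := ((hg s hs).sub_const (g a)).sub (((hasDerivAt_id' s).sub_const a).smul_const (g' a))
      rwa [one_smul] at this
  have hB : ∀ s, HasDerivAt (fun s => K / 2 * (s - a) ^ 2) (K * (s - a)) s := fun s =>
    ((((hasDerivAt_id' s).sub_const a).fun_pow 2).const_mul (K / 2)).congr_deriv (by simp; ring)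
  refine image_norm_le_of_norm_deriv_right_le_deriv_boundary
    (fun s hs => (hr s hs).continuousAt.continuousWithinAt)
    (fun s hs => (hr s (Ico_subset_Icc_self hs)).hasDerivWithinAt) (by simp) hB hg'
    (right_mem_Icc.2 hab)

theorem norm_sub_sub_fderiv_le {f : E → F} {f' : E → E →L[ℝ] F} {C : ℝ}
    (hf : ∀ x, HasFDerivAt f (f' x) x) (hf' : ∀ x y, ‖f' x - f' y‖ ≤ C * ‖x - y‖) (x u : E) :
    ‖f (x + u) - f x - f' x u‖ ≤ C / 2 * ‖u‖ ^ 2 := by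
  have hseg : ∀ s : ℝ, HasDerivAt (fun s : ℝ => f (x + s • u)) (f' (x + s • u) u) s := fun s => by
    have := (hf (x + s • u)).comp_hasDerivAt s (((hasDerivAt_id' s).smul_const u).const_add x)
    rwa [one_smul] at this
  have key := norm_sub_sub_smul_deriv_le (K := C * ‖u‖ ^ 2) zero_le_one (fun s _ => hseg s)
    fun s hs => by
      calc ‖f' (x + s • u) u - f' (x + (0:ℝ) • u) u‖
          ≤ ‖f' (x + s • u) - f' x‖ * ‖u‖ := by
            simpa using (f' (x + s • u) - f' x).le_opNorm u
        _ ≤ C * ‖s • u‖ * ‖u‖ := by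
            gcongr; simpa using hf' (x + s • u) x
        _ = C * ‖u‖ ^ 2 * (s - 0) := by
            rw [norm_smul, Real.norm_of_nonneg hs.1]; ring
  simpa [mul_comm, mul_left_comm, mul_assoc, div_eq_mul_inv] using key

end Calculus

section InnerProduct

variable {E : Type*} [NormedAddCommGroup E] [InnerProductSpace ℝ E]

theorem mul_norm_le_of_mul_norm_sq_le_inner {m : ℝ} {v w : E}
    (h : m * ‖v‖ ^ 2 ≤ inner ℝ v w) : m * ‖v‖ ≤ ‖w‖ := by
  rcases (norm_nonneg v).eq_or_lt with hv | hv
  · simp [← hv]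
  · have := real_inner_le_norm v w
    nlinarith

end InnerProduct

namespace TVOpt

variable {n : ℕ} (P : TVOpt n)

local notation "𝔼" => EuclideanSpace ℝ (Fin n)

theorem C1_nonneg : 0 ≤ P.C1 := (norm_nonneg (P.d3 0 0)).trans (P.d3_bound 0 0)
theorem C2_nonneg : 0 ≤ P.C2 := (norm_nonneg _).trans (P.dthess_bound 0 0)

theorem hess_hessInv_apply (x : 𝔼) (t : ℝ) (w : 𝔼) : P.hess x t (P.hessInv x t w) = w :=
  congrArg (fun A : 𝔼 →L[ℝ] 𝔼 => A w) (P.hessInv_right x t)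

theorem hessInv_hess_apply (x : 𝔼) (t : ℝ) (w : 𝔼) : P.hessInv x t (P.hess x t w) = w :=
  congrArg (fun A : 𝔼 →L[ℝ] 𝔼 => A w) (P.hessInv_left x t)

theorem norm_hessInv_apply_le (x : 𝔼) (t : ℝ) (w : 𝔼) : ‖P.hessInv x t w‖ ≤ ‖w‖ / P.m := by
  rw [le_div_iff₀ P.m_pos, mul_comm]
  simpa [hess_hessInv_apply] using
    mul_norm_le_of_mul_norm_sq_le_inner (P.strong_convex x t (P.hessInv x t w))

theorem mul_norm_sub_sq_le_inner_grad_sub (t : ℝ) (x y : 𝔼) :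
    P.m * ‖x - y‖ ^ 2 ≤ inner ℝ (x - y) (P.grad x t - P.grad y t) := by
  set v := x - y
  have hφ : ∀ s : ℝ, HasDerivAt (fun s : ℝ => inner ℝ v (P.grad (y + s • v) t))
      (inner ℝ v (P.hess (y + s • v) t v)) s := fun s => by
    have hseg := (P.hess_spec (y + s • v) t).comp_hasDerivAt s
      (((hasDerivAt_id' s).smul_const v).const_add y)
    rw [one_smul] at hseg
    simpa using (hasDerivAt_const s v).inner ℝ hseg
  have := mul_sub_le_image_sub_of_le_deriv (fun s => (hφ s).differentiableAt)
    (fun s => (hφ s).deriv ▸ P.strong_convex (y + s • v) t v) zero_le_one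
  simpa [v, inner_sub_right] using this

theorem mul_norm_sub_xstar_le (x : 𝔼) (t : ℝ) : P.m * ‖x - P.xstar t‖ ≤ ‖P.grad x t‖ := by
  simpa [P.xstar_grad] using
    mul_norm_le_of_mul_norm_sq_le_inner (P.mul_norm_sub_sq_le_inner_grad_sub t x (P.xstar t))

theorem norm_hess_sub_le_space (t : ℝ) (x y : 𝔼) : ‖P.hess x t - P.hess y t‖ ≤ P.C1 * ‖x - y‖ :=
  norm_sub_le_of_hasFDerivAt_of_norm_le (fun z => P.d3_spec z t) (fun z => P.d3_bound z t) x y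

theorem norm_hess_sub_le_time (x : 𝔼) (t s : ℝ) : ‖P.hess x t - P.hess x s‖ ≤ P.C2 * |t - s| :=
  norm_sub_le_of_hasDerivAt_of_norm_le (P.dthess_spec x) (P.dthess_bound x) t s

theorem norm_dtgrad_sub_le_time (x : 𝔼) (t s : ℝ) :
    ‖P.dtgrad x t - P.dtgrad x s‖ ≤ P.C3 * |t - s| :=
  norm_sub_le_of_hasDerivAt_of_norm_le (P.dttgrad_spec x) (P.dttgrad_bound x) t s

/-- No symmetry of mixed partials is needed: the difference quotients in `τ` of
`∇ₓ f(x;τ) - ∇ₓ f(y;τ)` are controlled by `∇_{xtx} f` through the mean value theorem in `x`. -/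
theorem norm_dtgrad_sub_le_space (t : ℝ) (x y : 𝔼) :
    ‖P.dtgrad x t - P.dtgrad y t‖ ≤ P.C2 * ‖x - y‖ := by
  refine ((P.dtgrad_spec x t).sub (P.dtgrad_spec y t)).le_of_lip'
    (mul_nonneg P.C2_nonneg (norm_nonneg _)) (Filter.Eventually.of_forall fun τ => ?_)
  have hincr : ∀ z, HasFDerivAt (fun z => P.grad z τ - P.grad z t) (P.hess z τ - P.hess z t) z :=
    fun z => (P.hess_spec z τ).sub (P.hess_spec z t)
  have hmvt :=
    norm_sub_le_of_hasFDerivAt_of_norm_le hincr (fun z => P.norm_hess_sub_le_time z τ t) x y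
  calc ‖(P.grad x τ - P.grad y τ) - (P.grad x t - P.grad y t)‖
      = ‖(P.grad x τ - P.grad x t) - (P.grad y τ - P.grad y t)‖ := by congr 1; abel
    _ ≤ P.C2 * |τ - t| * ‖x - y‖ := hmvt
    _ = P.C2 * ‖x - y‖ * ‖τ - t‖ := by rw [Real.norm_eq_abs]; ring

theorem norm_grad_taylor_space_le (t : ℝ) (y u : 𝔼) :
    ‖P.grad (y + u) t - P.grad y t - P.hess y t u‖ ≤ P.C1 / 2 * ‖u‖ ^ 2 :=
  norm_sub_sub_fderiv_le (fun x => P.hess_spec x t) (P.norm_hess_sub_le_space t) y u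

theorem norm_grad_taylor_time_le (y : 𝔼) (t : ℝ) {h : ℝ} (hh : 0 ≤ h) :
    ‖P.grad y (t + h) - P.grad y t - h • P.dtgrad y t‖ ≤ P.C3 / 2 * h ^ 2 := by
  have := norm_sub_sub_smul_deriv_le (le_add_of_nonneg_right hh) (fun s _ => P.dtgrad_spec y s)
    fun s hs => by
      rw [← abs_of_nonneg (sub_nonneg.2 hs.1)]
      exact P.norm_dtgrad_sub_le_time y s t
  simpa using this

def predDir (x : 𝔼) (t : ℝ) : 𝔼 := P.hessInv x t (P.dtgrad x t)

/-- `x_{k+1|k}` of the paper, for `x = x_k`, `t = t_k`. -/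
def predict (x : 𝔼) (t h : ℝ) : 𝔼 := x - h • P.predDir x t

theorem norm_predDir_le (x : 𝔼) (t : ℝ) : ‖P.predDir x t‖ ≤ P.C0 / P.m :=
  (P.norm_hessInv_apply_le x t _).trans
    (div_le_div_of_nonneg_right (P.dtgrad_bound x t) P.m_pos.le)

theorem norm_predDir_sub_le (t : ℝ) (x y : 𝔼) :
    ‖P.predDir x t - P.predDir y t‖ ≤ (P.C0 * P.C1 / P.m ^ 2 + P.C2 / P.m) * ‖x - y‖ := by
  set d := P.predDir y t
  have hd : P.hess y t d = P.dtgrad y t := P.hess_hessInv_apply y t _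
  have hdiff : P.predDir x t - d =
      P.hessInv x t ((P.dtgrad x t - P.dtgrad y t) + (P.hess y t - P.hess x t) d) := by
    rw [map_add, map_sub, sub_apply, hd, map_sub, hessInv_hess_apply, predDir]
    abel
  have hhess : ‖(P.hess y t - P.hess x t) d‖ ≤ P.C1 * ‖x - y‖ * (P.C0 / P.m) := by
    refine ((P.hess y t - P.hess x t).le_opNorm d).trans <| mul_le_mul ?_ (P.norm_predDir_le y t)
      (norm_nonneg d) (mul_nonneg P.C1_nonneg (norm_nonneg _))
    rw [norm_sub_rev x y]
    exact P.norm_hess_sub_le_space t y x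
  calc ‖P.predDir x t - d‖
      ≤ ‖(P.dtgrad x t - P.dtgrad y t) + (P.hess y t - P.hess x t) d‖ / P.m := by
        rw [hdiff]; exact P.norm_hessInv_apply_le x t _
    _ ≤ (P.C2 * ‖x - y‖ + P.C1 * ‖x - y‖ * (P.C0 / P.m)) / P.m := by
        refine div_le_div_of_nonneg_right ?_ P.m_pos.le
        exact (norm_add_le _ _).trans (add_le_add (P.norm_dtgrad_sub_le_space t x y) hhess)
    _ = (P.C0 * P.C1 / P.m ^ 2 + P.C2 / P.m) * ‖x - y‖ := by
        field_simp [P.m_pos.ne']; ring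

theorem norm_predict_sub_le (t : ℝ) {h : ℝ} (hh : 0 ≤ h) (x y : 𝔼) :
    ‖P.predict x t h - P.predict y t h‖ ≤
      (1 + h * (P.C0 * P.C1 / P.m ^ 2 + P.C2 / P.m)) * ‖x - y‖ :=
  calc ‖P.predict x t h - P.predict y t h‖
      = ‖(x - y) - h • (P.predDir x t - P.predDir y t)‖ := by
        rw [predict, predict, smul_sub]; congr 1; abel
    _ ≤ ‖x - y‖ + h * ((P.C0 * P.C1 / P.m ^ 2 + P.C2 / P.m) * ‖x - y‖) := by
        refine (norm_sub_le _ _).trans (add_le_add_right ?_ _)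
        rw [norm_smul, Real.norm_of_nonneg hh]
        exact mul_le_mul_of_nonneg_left (P.norm_predDir_sub_le t x y) hh
    _ = (1 + h * (P.C0 * P.C1 / P.m ^ 2 + P.C2 / P.m)) * ‖x - y‖ := by ring

/-- Starting from the optimum, the prediction cancels the first-order terms of the Taylor
expansion of `∇ₓ f` around `(x*(t), t)`. -/
theorem norm_grad_predict_xstar_le (t : ℝ) {h : ℝ} (hh : 0 ≤ h) :
    ‖P.grad (P.predict (P.xstar t) t h) (t + h)‖ ≤
      P.C1 / 2 * (h * (P.C0 / P.m)) ^ 2 + P.C2 * h * (h * (P.C0 / P.m)) + P.C3 / 2 * h ^ 2 := by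
  set y := P.xstar t
  set u := -(h • P.predDir y t)
  have hu : ‖u‖ ≤ h * (P.C0 / P.m) := by
    rw [norm_neg, norm_smul, Real.norm_of_nonneg hh]
    exact mul_le_mul_of_nonneg_left (P.norm_predDir_le y t) hh
  have hfirst : P.hess y t u + h • P.dtgrad y t = 0 := by
    rw [map_neg, map_smul, predDir, hess_hessInv_apply, neg_add_cancel]
  have hsplit : P.grad (y + u) (t + h) =
      (P.grad (y + u) (t + h) - P.grad y (t + h) - P.hess y (t + h) u)
        + (P.hess y (t + h) - P.hess y t) u
        + (P.grad y (t + h) - P.grad y t - h • P.dtgrad y t) := by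
    rw [sub_apply, eq_neg_of_add_eq_zero_left hfirst, P.xstar_grad]
    abel
  have hmixed : ‖(P.hess y (t + h) - P.hess y t) u‖ ≤ P.C2 * h * ‖u‖ := by
    refine (ContinuousLinearMap.le_opNorm _ _).trans
      (mul_le_mul_of_nonneg_right ?_ (norm_nonneg u))
    simpa [abs_of_nonneg hh] using P.norm_hess_sub_le_time y (t + h) t
  have hpred : P.predict y t h = y + u := by rw [predict, sub_eq_add_neg]
  rw [hpred, hsplit]
  refine (norm_add₃_le ..).trans (add_le_add_three ?_ ?_ (P.norm_grad_taylor_time_le y t hh))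
  · exact (P.norm_grad_taylor_space_le (t + h) y u).trans (by gcongr; linarith [P.C1_nonneg])
  · exact hmixed.trans (by gcongr; exact mul_nonneg P.C2_nonneg hh)

theorem norm_predict_xstar_sub_xstar_le (t : ℝ) {h : ℝ} (hh : 0 ≤ h) :
    ‖P.predict (P.xstar t) t h - P.xstar (t + h)‖ ≤
      h ^ 2 / 2 * (P.C0 ^ 2 * P.C1 / P.m ^ 3 + 2 * P.C0 * P.C2 / P.m ^ 2 + P.C3 / P.m) := by
  have hm := P.m_pos
  rw [← mul_le_mul_iff_of_pos_left hm]
  calc P.m * ‖P.predict (P.xstar t) t h - P.xstar (t + h)‖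
      ≤ ‖P.grad (P.predict (P.xstar t) t h) (t + h)‖ := P.mul_norm_sub_xstar_le _ _
    _ ≤ _ := P.norm_grad_predict_xstar_le t hh
    _ = _ := by field_simp

end TVOpt

/-- One-step error bound of the exact prediction step:
`‖x_(k+1|k) − x*(t_(k+1))‖ ≤ σ‖x_k − x*(t_k)‖ + (h²/2)(C₀²C₁/m³ + 2C₀C₂/m² + C₃/m)`,
with `σ = 1 + h(C₀C₁/m² + C₂/m)`. -/
theorem prediction_one_step_error (n : ℕ) (P : TVOpt n) (h : ℝ) (hh : 0 < h) :
    ∀ (k : ℕ) (xk : EuclideanSpace ℝ (Fin n)),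
      ‖(xk - h • P.hessInv xk ((k : ℝ) * h) (P.dtgrad xk ((k : ℝ) * h)))
          - P.xstar (((k : ℝ) + 1) * h)‖ ≤
        (1 + h * (P.C0 * P.C1 / P.m ^ 2 + P.C2 / P.m)) * ‖xk - P.xstar ((k : ℝ) * h)‖ +
        h ^ 2 / 2 * (P.C0 ^ 2 * P.C1 / P.m ^ 3 + 2 * P.C0 * P.C2 / P.m ^ 2 + P.C3 / P.m) := by
  intro k xk
  set t := (k : ℝ) * h
  rw [show ((k : ℝ) + 1) * h = t + h by ring]
  calc ‖P.predict xk t h - P.xstar (t + h)‖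
      ≤ ‖P.predict xk t h - P.predict (P.xstar t) t h‖
        + ‖P.predict (P.xstar t) t h - P.xstar (t + h)‖ := norm_sub_le_norm_sub_add_norm_sub _ _ _
    _ ≤ _ := add_le_add (P.norm_predict_sub_le t hh.le _ _)
        (P.norm_predict_xstar_sub_xstar_le t hh.le)
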